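/- arXiv:1606.06705 — 3 statements merged into one kernel-verified Lean document; each statement's English description precedes it below -/
import Mathlib

section
/- Let q ∈ (0,∞], N ≤ M, and {τ_k}_{k=N}^M geometrically increasing with ratio α > 1. Then for all nonnegative sequences {a_k}, ‖{τ_k · sup_{k≤m≤M} a_m}‖_{ℓ^q} ≈ ‖{τ_k a_k}‖_{ℓ^q}, with equivalence constants depending only on α and q. -/
/-!
Iterating `α τ_{k-1} ≤ τ_k` gives `τ_k ≤ α^{-(m-k)} τ_m` for `k ≤ m`. Hence for `q < ∞`
`(τ_k sup_{m ≥ k} a_m)^q ≤ ∑_{m ≥ k} α^{-q(m-k)} (τ_m a_m)^q`, and summing over `k` is a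
convolution with a geometric kernel of total mass `(1 - α^{-q})⁻¹`. For `q = ∞` only the
monotonicity of `τ` is needed. The reverse inequality holds with constant `1`, as
`a_k ≤ sup_{m ≥ k} a_m`.
-/

open ENNReal Set

/-- The discrete `ℓ^q` quasi-norm over an index set `Z ⊆ ℤ`, with `q ∈ (0,∞]`. -/
noncomputable def lqNorm (q : ℝ≥0∞) (Z : Set ℤ) (b : ℤ → ℝ≥0∞) : ℝ≥0∞ :=
  if q = ∞ then ⨆ k ∈ Z, b k else (∑' k : Z, b (k : ℤ) ^ q.toReal) ^ (1 / q.toReal)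

lemma lqNorm_mono {q : ℝ≥0∞} {Z : Set ℤ} {b c : ℤ → ℝ≥0∞} (h : ∀ k ∈ Z, b k ≤ c k) :
    lqNorm q Z b ≤ lqNorm q Z c := by
  unfold lqNorm
  split_ifs
  · exact iSup₂_mono h
  · gcongr with k
    exact h k k.2

lemma le_pow_toNat_sub_mul_of_ordConnected {Z : Set ℤ} {τ : ℤ → ℝ≥0∞} {γ : ℝ≥0∞}
    (hZ : Z.OrdConnected) (hstep : ∀ k ∈ Z, k - 1 ∈ Z → τ (k - 1) ≤ γ * τ k)
    {m : ℤ} (hm : m ∈ Z) : ∀ k ≤ m, k ∈ Z → τ k ≤ γ ^ (m - k).toNat * τ m := by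
  refine Int.leInductionDown (by simp) fun k hkm ih hk' => ?_
  have hk : k ∈ Z := hZ.out hk' hm ⟨by omega, hkm⟩
  have hexp : (m - (k - 1)).toNat = (m - k).toNat + 1 := by omega
  calc τ (k - 1) ≤ γ * τ k := hstep k hk hk'
    _ ≤ γ * (γ ^ (m - k).toNat * τ m) := by gcongr; exact ih hk
    _ = γ ^ (m - (k - 1)).toNat * τ m := by rw [hexp, pow_succ']; ring

noncomputable def geometricKernel (β : ℝ≥0∞) (j : ℤ) : ℝ≥0∞ := if 0 ≤ j then β ^ j.toNat else 0

lemma tsum_geometricKernel (β : ℝ≥0∞) : ∑' j, geometricKernel β j = (1 - β)⁻¹ := by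
  rw [← ENNReal.tsum_geometric, ← Nat.cast_injective.tsum_eq]
  · simp [geometricKernel]
  · intro j hj
    have hj : 0 ≤ j := by by_contra h; simp [geometricKernel, h] at hj
    exact ⟨j.toNat, by omega⟩

lemma tsum_tsum_mul_sub_eq (w b : ℤ → ℝ≥0∞) :
    ∑' k, ∑' m, w (m - k) * b m = (∑' j, w j) * ∑' m, b m := by
  rw [ENNReal.tsum_comm, ← ENNReal.tsum_mul_left]
  refine tsum_congr fun m => ?_
  rw [ENNReal.tsum_mul_right, ← (Equiv.subLeft m).tsum_eq w]
  rfl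

section TailSup

variable {Z : Set ℤ} {τ a : ℤ → ℝ≥0∞} {γ : ℝ≥0∞}

lemma rpow_mul_tailSup_le_tsum {r : ℝ} (hr : 0 < r)
    (hdecay : ∀ k ∈ Z, ∀ m ∈ Z, k ≤ m → τ k ≤ γ ^ (m - k).toNat * τ m) {k : ℤ} (hk : k ∈ Z) :
    (τ k * ⨆ m ∈ Z ∩ Ici k, a m) ^ r ≤
      ∑' m, geometricKernel (γ ^ r) (m - k) * Z.indicator (fun m => (τ m * a m) ^ r) m := by
  simp only [ENNReal.mul_iSup]
  rw [← ENNReal.le_rpow_inv_iff hr]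
  refine iSup₂_le fun m ⟨hm, hkm⟩ => ?_
  rw [ENNReal.le_rpow_inv_iff hr]
  set n := (m - k).toNat
  have hpow : (γ ^ n) ^ r = (γ ^ r) ^ n := by
    rw [← ENNReal.rpow_natCast, ← ENNReal.rpow_mul, mul_comm, ENNReal.rpow_mul,
      ENNReal.rpow_natCast]
  calc (τ k * a m) ^ r ≤ (γ ^ n * τ m * a m) ^ r := by gcongr; exact hdecay k hk m hm hkm
    _ = geometricKernel (γ ^ r) (m - k) * Z.indicator (fun m => (τ m * a m) ^ r) m := by
      rw [geometricKernel, if_pos (sub_nonneg.2 hkm), indicator_of_mem hm, mul_assoc,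
        ENNReal.mul_rpow_of_nonneg _ _ hr.le, hpow]
    _ ≤ _ := ENNReal.le_tsum m

lemma tsum_rpow_mul_tailSup_le {r : ℝ} (hr : 0 < r)
    (hdecay : ∀ k ∈ Z, ∀ m ∈ Z, k ≤ m → τ k ≤ γ ^ (m - k).toNat * τ m) :
    ∑' k : Z, (τ k * ⨆ m ∈ Z ∩ Ici (k : ℤ), a m) ^ r ≤
      (1 - γ ^ r)⁻¹ * ∑' k : Z, (τ k * a k) ^ r := by
  rw [tsum_subtype Z fun k => (τ k * ⨆ m ∈ Z ∩ Ici k, a m) ^ r,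
    tsum_subtype Z fun k => (τ k * a k) ^ r, ← tsum_geometricKernel, ← tsum_tsum_mul_sub_eq]
  refine ENNReal.tsum_le_tsum fun k => ?_
  by_cases hk : k ∈ Z
  · rw [indicator_of_mem hk]
    exact rpow_mul_tailSup_le_tsum hr hdecay hk
  · simp [indicator_of_notMem hk]

lemma iSup_mul_tailSup_le (hmono : ∀ k ∈ Z, ∀ m ∈ Z, k ≤ m → τ k ≤ τ m) :
    ⨆ k ∈ Z, τ k * ⨆ m ∈ Z ∩ Ici k, a m ≤ ⨆ m ∈ Z, τ m * a m := by
  refine iSup₂_le fun k hk => ?_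
  simp only [ENNReal.mul_iSup]
  refine iSup₂_le fun m ⟨hm, hkm⟩ => ?_
  calc τ k * a m ≤ τ m * a m := by gcongr; exact hmono k hk m hm hkm
    _ ≤ ⨆ m ∈ Z, τ m * a m := le_iSup₂ (f := fun m _ => τ m * a m) m hm

noncomputable def tailSupConst (q γ : ℝ≥0∞) : ℝ≥0∞ :=
  if q = ∞ then 1 else (1 - γ ^ q.toReal)⁻¹ ^ (1 / q.toReal)

lemma tailSupConst_lt_top {q : ℝ≥0∞} (hq : 0 < q) (hγ : γ < 1) : tailSupConst q γ < ∞ := by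
  unfold tailSupConst
  split_ifs with hq_top
  · exact one_lt_top
  · have hr : 0 < q.toReal := ENNReal.toReal_pos hq.ne' hq_top
    refine ENNReal.rpow_lt_top_of_nonneg (by positivity) ?_
    exact (ENNReal.inv_lt_top.2 (tsub_pos_of_lt (ENNReal.rpow_lt_one hγ hr))).ne

lemma lqNorm_mul_tailSup_le {q : ℝ≥0∞} (hq : 0 < q) (hγ : γ ≤ 1)
    (hdecay : ∀ k ∈ Z, ∀ m ∈ Z, k ≤ m → τ k ≤ γ ^ (m - k).toNat * τ m) :
    lqNorm q Z (fun k => τ k * ⨆ m ∈ Z ∩ Ici k, a m) ≤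
      tailSupConst q γ * lqNorm q Z (fun k => τ k * a k) := by
  unfold lqNorm tailSupConst
  split_ifs with hq_top
  · rw [one_mul]
    exact iSup_mul_tailSup_le fun k hk m hm hkm =>
      (hdecay k hk m hm hkm).trans (mul_le_of_le_one_left' (pow_le_one' hγ _))
  · have hr : 0 < q.toReal := ENNReal.toReal_pos hq.ne' hq_top
    rw [← ENNReal.mul_rpow_of_nonneg _ _ (by positivity)]
    exact ENNReal.rpow_le_rpow (tsum_rpow_mul_tailSup_le hr hdecay) (by positivity)

end TailSup

theorem lq_norm_tail_sups_equiv_geometric_general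
    (q : ℝ≥0∞) (hq : 0 < q) (α : ℝ≥0∞) (hα : 1 < α) :
    ∃ c₁ c₂ : ℝ≥0∞, 0 < c₁ ∧ c₂ < ∞ ∧
      ∀ (Z : Set ℤ), Z.OrdConnected → Z.Nonempty →
      ∀ (τ : ℤ → ℝ≥0∞), (∀ k ∈ Z, 0 < τ k ∧ τ k < ∞) →
        (∀ k, k ∈ Z → (k - 1) ∈ Z → α * τ (k - 1) ≤ τ k) →
      ∀ a : ℤ → ℝ≥0∞,
        c₁ * lqNorm q Z (fun k => τ k * a k)
          ≤ lqNorm q Z (fun k => τ k * ⨆ m ∈ Z ∩ Set.Ici k, a m) ∧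
        lqNorm q Z (fun k => τ k * ⨆ m ∈ Z ∩ Set.Ici k, a m)
          ≤ c₂ * lqNorm q Z (fun k => τ k * a k) := by
  have hγ : α⁻¹ < 1 := ENNReal.inv_lt_one.2 hα
  refine ⟨1, tailSupConst q α⁻¹, one_pos, tailSupConst_lt_top hq hγ,
    fun Z hZ _ τ hτ hstep a => ⟨?_, ?_⟩⟩
  · rw [one_mul]
    exact lqNorm_mono fun k hk => by gcongr; exact le_iSup₂_of_le k ⟨hk, self_mem_Ici⟩ le_rfl
  · have hstep' : ∀ k ∈ Z, k - 1 ∈ Z → τ (k - 1) ≤ α⁻¹ * τ k := fun k hk hk' => by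
      rw [← ENNReal.div_eq_inv_mul, ENNReal.le_div_iff_mul_le (Or.inr (hτ k hk).1.ne')
        (Or.inr (hτ k hk).2.ne), mul_comm]
      exact hstep k hk hk'
    exact lqNorm_mul_tailSup_le hq hγ.le fun k hk m hm hkm =>
      le_pow_toNat_sub_mul_of_ordConnected hZ hstep' hm k hkm hk

/-- Leindler: for a geometrically increasing sequence `{τ_k}` on an
integer interval `Z` (with right endpoint `M`), the `ℓ^q` norm of
`{τ_k sup_{k≤m≤M} a_m}` is equivalent to that of `{τ_k a_k}`, with constants
depending only on `α` and `q`. -/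
theorem lq_norm_tail_sups_equiv_geometric
    (q : ℝ≥0∞) (hq : 0 < q) (α : ℝ≥0∞) (hα : 1 < α) (hα' : α < ∞) :
    ∃ c₁ c₂ : ℝ≥0∞, 0 < c₁ ∧ c₂ < ∞ ∧
      ∀ (Z : Set ℤ), Z.OrdConnected → Z.Nonempty →
      ∀ (τ : ℤ → ℝ≥0∞), (∀ k ∈ Z, 0 < τ k ∧ τ k < ∞) →
        (∀ k, k ∈ Z → (k - 1) ∈ Z → α * τ (k - 1) ≤ τ k) →
      ∀ a : ℤ → ℝ≥0∞,
        c₁ * lqNorm q Z (fun k => τ k * a k)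
          ≤ lqNorm q Z (fun k => τ k * ⨆ m ∈ Z ∩ Set.Ici k, a m) ∧
        lqNorm q Z (fun k => τ k * ⨆ m ∈ Z ∩ Set.Ici k, a m)
          ≤ c₂ * lqNorm q Z (fun k => τ k * a k) :=
  lq_norm_tail_sups_equiv_geometric_general q hq α hα
end

section
/- Let 0 < q, r < ∞, u, v, w weights on (0,∞), and {x_k} a covering sequence with ∫_0^{x_k} u = 2^k. Then the left-hand side L(h) := (∫_0^∞ (∫_x^∞ (∫_t^∞ h)^q w(t) dt)^{r/q} u(x) dx)^{1/r} is equivalent, uniformly in nonnegative measurable h, to ‖{2^{k/r} (∫_{x_k}^{x_{k+1}} (∫_s^{x_{k+1}} h)^q w(s) ds)^{1/q}}‖_{ℓ^r} + ‖{2^{k/r} (∫_{x_k}^{x_{k+1}} w)^{1/q} ∫_{x_{k+1}}^∞ h}‖_{ℓ^r}. -/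
/-!
Write `F(t) = ∫_t^∞ (∫_s^∞ h)^q w`. Since `F` is nonincreasing and `u` has mass `2^k` on
`(x_k, x_{k+1}]`, the `r`-th power of the left-hand side lies between `∑ 2^k F(x_{k+1})^{r/q}` and
`∑ 2^k F(x_k)^{r/q}`, and an index shift costs only a factor `2`. Splitting
`∫_s^∞ h = ∫_s^{x_{k+1}} h + ∫_{x_{k+1}}^∞ h` shows that the block integral
`D_k = ∫_{x_k}^{x_{k+1}} (∫_s^∞ h)^q w` is comparable to the sum of the `q`-th powers of the two
discrete terms. For the lower bound `D_k ≤ F(x_k)`; for the upper bound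
`F(x_k) = ∑_{n ≥ 0} D_{k+n}`, and these tails are absorbed by the discrete Hardy inequality
`∑ 2^k (∑_{n ≥ 0} a_{k+n})^p ≲ ∑ 2^k a_k^p`, valid for every `p > 0` (subadditivity of `t ↦ t^p`
for `p ≤ 1`, Hölder's inequality against geometric weights for `p > 1`).
-/

open MeasureTheory ENNReal Set

def IsWeight (v : ℝ → ℝ≥0∞) : Prop :=
  Measurable v ∧ ∀ x > (0 : ℝ),
    (0 < ∫⁻ t in Set.Ioc 0 x, v t) ∧ (∫⁻ t in Set.Ioc 0 x, v t) < ∞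

namespace ENNReal

theorem mul_rpow_rpow_div {q r : ℝ} (hq : q ≠ 0) (hrq : 0 ≤ r / q) (a b : ℝ≥0∞) :
    (a * b ^ q) ^ (r / q) = a ^ (r / q) * b ^ r := by
  rw [mul_rpow_of_nonneg _ _ hrq, ← rpow_mul, mul_div_cancel₀ r hq]

theorem rpow_tsum_le_tsum_rpow {ι : Type*} {p : ℝ} (hp : 0 < p) (hp1 : p ≤ 1) (f : ι → ℝ≥0∞) :
    (∑' i, f i) ^ p ≤ ∑' i, f i ^ p := by
  have hfin (s : Finset ι) : (∑ i ∈ s, f i) ^ p ≤ ∑ i ∈ s, f i ^ p :=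
    Finset.le_sum_of_subadditive (· ^ p) (zero_rpow_of_pos hp).le
      (fun a b => rpow_add_le_add_rpow a b hp.le hp1) s f
  exact le_of_tendsto ((continuous_rpow_const.tendsto _).comp ENNReal.summable.hasSum)
    (.of_forall fun s => (hfin s).trans (ENNReal.sum_le_tsum s))

theorem tsum_mul_le_Lp_mul_Lq {ι : Type*} {p q : ℝ} (hpq : p.HolderConjugate q)
    (f g : ι → ℝ≥0∞) :
    ∑' i, f i * g i ≤ (∑' i, f i ^ p) ^ (1 / p) * (∑' i, g i ^ q) ^ (1 / q) := by
  let _ : MeasurableSpace ι := ⊤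
  simpa only [lintegral_count, Pi.mul_apply] using
    lintegral_mul_le_Lp_mul_Lq (Measure.count : Measure ι) hpq measurable_from_top.aemeasurable
      measurable_from_top.aemeasurable

theorem tsum_two_zpow_mul_add (b : ℤ → ℝ≥0∞) (n : ℤ) :
    ∑' k : ℤ, (2 : ℝ≥0∞) ^ k * b (k + n) = 2 ^ (-n) * ∑' k : ℤ, 2 ^ k * b k := by
  rw [← (Equiv.subRight n).tsum_eq, ← ENNReal.tsum_mul_left]
  refine tsum_congr fun k => ?_
  rw [Equiv.subRight_apply, sub_add_cancel, ← mul_assoc,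
    ← ENNReal.zpow_add two_ne_zero ofNat_ne_top, neg_add_eq_sub]

theorem exists_rpow_tsum_le_mul_tsum_two_rpow_mul {p : ℝ} (hp : 0 < p) :
    ∃ C ≠ ∞, ∀ a : ℕ → ℝ≥0∞,
      (∑' n, a n) ^ p ≤ C * ∑' n : ℕ, (2 : ℝ≥0∞) ^ ((n : ℝ) / 2) * a n ^ p := by
  rcases le_or_gt p 1 with hp1 | hp1
  · refine ⟨1, one_ne_top, fun a => ?_⟩
    calc (∑' n, a n) ^ p ≤ ∑' n, a n ^ p := rpow_tsum_le_tsum_rpow hp hp1 a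
      _ ≤ 1 * ∑' n : ℕ, (2 : ℝ≥0∞) ^ ((n : ℝ) / 2) * a n ^ p := by
        rw [one_mul]
        gcongr with n
        exact le_mul_of_one_le_left' ((rpow_zero (x := (2 : ℝ≥0∞))).symm.trans_le
          (rpow_le_rpow_of_exponent_le one_le_two (by positivity)))
  -- Hölder against the geometric weights `2 ^ (-n / (2p))`
  · set p' := p.conjExponent
    have hpp' : p.HolderConjugate p' := .conjExponent hp1
    set τ : ℝ≥0∞ := 2 ^ (-(p' / (2 * p)))
    have hτ : τ < 1 := rpow_lt_one_of_one_lt_of_neg one_lt_two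
      (neg_neg_of_pos (div_pos hpp'.symm.pos (by positivity)))
    refine ⟨(∑' n : ℕ, τ ^ n) ^ (p / p'),
      (rpow_lt_top_of_nonneg (div_pos hp hpp'.symm.pos).le
        (tsum_geometric_lt_top.2 hτ).ne).ne, fun a => ?_⟩
    have hsplit (n : ℕ) : a n =
        (2 : ℝ≥0∞) ^ (-((n : ℝ) / (2 * p))) * (2 ^ ((n : ℝ) / (2 * p)) * a n) := by
      rw [← mul_assoc, ← rpow_add _ _ two_ne_zero ofNat_ne_top, neg_add_cancel, rpow_zero,
        one_mul]
    have hf (n : ℕ) : ((2 : ℝ≥0∞) ^ (-((n : ℝ) / (2 * p)))) ^ p' = τ ^ n := by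
      rw [← rpow_natCast, ← rpow_mul, ← rpow_mul]
      ring_nf
    have hg (n : ℕ) : ((2 : ℝ≥0∞) ^ ((n : ℝ) / (2 * p)) * a n) ^ p
        = 2 ^ ((n : ℝ) / 2) * a n ^ p := by
      rw [mul_rpow_of_nonneg _ _ hp.le, ← rpow_mul]
      congr 2
      field_simp
    calc (∑' n, a n) ^ p
        ≤ ((∑' n : ℕ, τ ^ n) ^ (1 / p') *
            (∑' n : ℕ, (2 : ℝ≥0∞) ^ ((n : ℝ) / 2) * a n ^ p) ^ (1 / p)) ^ p := by
          gcongr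
          conv_lhs => rw [tsum_congr hsplit]
          simpa only [hf, hg] using tsum_mul_le_Lp_mul_Lq hpp'.symm
            (fun n : ℕ => (2 : ℝ≥0∞) ^ (-((n : ℝ) / (2 * p))))
            (fun n : ℕ => (2 : ℝ≥0∞) ^ ((n : ℝ) / (2 * p)) * a n)
      _ = (∑' n : ℕ, τ ^ n) ^ (p / p') * ∑' n : ℕ, (2 : ℝ≥0∞) ^ ((n : ℝ) / 2) * a n ^ p := by
          rw [mul_rpow_of_nonneg _ _ hp.le, ← rpow_mul, ← rpow_mul, one_div_mul_cancel hp.ne',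
            rpow_one, one_div_mul_eq_div]

theorem exists_tsum_two_zpow_mul_rpow_tsum_le {p : ℝ} (hp : 0 < p) :
    ∃ C ≠ ∞, ∀ a : ℤ → ℝ≥0∞,
      ∑' k : ℤ, (2 : ℝ≥0∞) ^ k * (∑' n : ℕ, a (k + n)) ^ p
        ≤ C * ∑' k : ℤ, (2 : ℝ≥0∞) ^ k * a k ^ p := by
  obtain ⟨C, hC, hpow⟩ := exists_rpow_tsum_le_mul_tsum_two_rpow_mul hp
  set σ : ℝ≥0∞ := 2 ^ (-(1 / 2 : ℝ))
  have hσ : σ < 1 := rpow_lt_one_of_one_lt_of_neg one_lt_two (by norm_num)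
  refine ⟨C * ∑' n : ℕ, σ ^ n, mul_ne_top hC (tsum_geometric_lt_top.2 hσ).ne, fun a => ?_⟩
  -- the weight `2 ^ (n / 2)` is beaten by the shift factor `2 ^ (-n)`
  have hweight (n : ℕ) : (2 : ℝ≥0∞) ^ ((n : ℝ) / 2) * 2 ^ (-(n : ℤ)) = σ ^ n := by
    rw [← rpow_intCast, ← rpow_add _ _ two_ne_zero ofNat_ne_top, ← rpow_natCast, ← rpow_mul]
    push_cast
    ring_nf
  calc ∑' k : ℤ, (2 : ℝ≥0∞) ^ k * (∑' n : ℕ, a (k + n)) ^ p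
      ≤ ∑' k : ℤ, 2 ^ k * (C * ∑' n : ℕ, (2 : ℝ≥0∞) ^ ((n : ℝ) / 2) * a (k + n) ^ p) := by
        gcongr with k
        exact hpow _
    _ = C * ∑' n : ℕ, 2 ^ ((n : ℝ) / 2) * ∑' k : ℤ, (2 : ℝ≥0∞) ^ k * a (k + n) ^ p := by
        simp_rw [← ENNReal.tsum_mul_left]
        rw [ENNReal.tsum_comm]
        refine tsum_congr fun n => tsum_congr fun k => ?_
        ring
    _ = C * ∑' n : ℕ, σ ^ n * ∑' k : ℤ, (2 : ℝ≥0∞) ^ k * a k ^ p := by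
        simp_rw [tsum_two_zpow_mul_add (fun k => a k ^ p), ← mul_assoc, hweight]
    _ = C * (∑' n : ℕ, σ ^ n) * ∑' k : ℤ, (2 : ℝ≥0∞) ^ k * a k ^ p := by
        rw [ENNReal.tsum_mul_right, mul_assoc]

end ENNReal

section Cover

variable {x : ℤ → ℝ}

theorem Ioi_eq_iUnion_Ioc_add_nat (hx : Monotone x) {a : ℝ}
    (hcov : ⋃ k, Ioc (x k) (x (k + 1)) = Ioi a) {k : ℤ} (hk : a ≤ x k) :
    Ioi (x k) = ⋃ n : ℕ, Ioc (x (k + n)) (x (k + n + 1)) := by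
  refine Subset.antisymm (fun t ht => ?_) (iUnion_subset fun n t ht => ?_)
  · obtain ⟨j, hj⟩ := mem_iUnion.1 (hcov.symm ▸ hk.trans_lt ht : t ∈ ⋃ j, Ioc (x j) (x (j + 1)))
    have hkj : k ≤ j := by
      by_contra! hjk
      exact (hj.2.trans (hx (by omega))).not_gt ht
    refine mem_iUnion.2 ⟨(j - k).toNat, ?_⟩
    rwa [show k + ((j - k).toNat : ℤ) = j by omega]
  · exact (hx (by omega : k ≤ k + n)).trans_lt ht.1

theorem setLIntegral_Ioc_eq_two_zpow {u : ℝ → ℝ≥0∞} (hx : Monotone x) (hx₀ : ∀ k, 0 ≤ x k)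
    (hxu : ∀ k : ℤ, ∫⁻ t in Ioc 0 (x k), u t = 2 ^ k) (k : ℤ) :
    ∫⁻ t in Ioc (x k) (x (k + 1)), u t = 2 ^ k := by
  have h := hxu (k + 1)
  rw [← Ioc_union_Ioc_eq_Ioc (hx₀ k) (hx (by omega)),
    lintegral_union measurableSet_Ioc (Ioc_disjoint_Ioc_of_le le_rfl), hxu k,
    ENNReal.zpow_add two_ne_zero ofNat_ne_top, zpow_one, mul_two] at h
  exact (ENNReal.add_right_inj (zpow_lt_top two_ne_zero ofNat_ne_top k).ne).1 h

end Cover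

section Dyadic

variable {x : ℤ → ℝ} {u g : ℝ → ℝ≥0∞} {s : Set ℝ}

theorem lintegral_eq_tsum_Ioc (hx : Monotone x) (hcov : ⋃ k, Ioc (x k) (x (k + 1)) = s)
    (f : ℝ → ℝ≥0∞) : ∫⁻ t in s, f t = ∑' k, ∫⁻ t in Ioc (x k) (x (k + 1)), f t := by
  rw [← hcov]
  exact lintegral_iUnion (fun _ => measurableSet_Ioc) hx.pairwise_disjoint_on_Ioc_succ f

theorem setLIntegral_Ioi_eq_tsum_Ioc (hx : Monotone x) {a : ℝ}
    (hcov : ⋃ k, Ioc (x k) (x (k + 1)) = Ioi a) {k : ℤ} (hk : a ≤ x k) (f : ℝ → ℝ≥0∞) :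
    ∫⁻ t in Ioi (x k), f t = ∑' n : ℕ, ∫⁻ t in Ioc (x (k + n)) (x (k + n + 1)), f t := by
  rw [Ioi_eq_iUnion_Ioc_add_nat hx hcov hk]
  exact lintegral_iUnion (fun _ => measurableSet_Ioc)
    (hx.pairwise_disjoint_on_Ioc_succ.comp_of_injective
      ((add_right_injective k).comp Nat.cast_injective)) f

theorem setLIntegral_Ioc_mul_le_of_antitone (hg : Antitone g) (hu : Measurable u) (a b : ℝ) :
    ∫⁻ t in Ioc a b, g t * u t ≤ g a * ∫⁻ t in Ioc a b, u t := by
  rw [← lintegral_const_mul _ hu]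
  exact setLIntegral_mono' measurableSet_Ioc fun _ ht => mul_le_mul_left (hg ht.1.le) _

theorem mul_setLIntegral_Ioc_le_of_antitone (hg : Antitone g) (a b : ℝ) :
    g b * ∫⁻ t in Ioc a b, u t ≤ ∫⁻ t in Ioc a b, g t * u t :=
  (lintegral_const_mul_le _ _).trans
    (setLIntegral_mono' measurableSet_Ioc fun _ ht => mul_le_mul_left (hg ht.2) _)

variable (hx : Monotone x) (hcov : ⋃ k, Ioc (x k) (x (k + 1)) = s)
  (hU : ∀ k : ℤ, ∫⁻ t in Ioc (x k) (x (k + 1)), u t = 2 ^ k)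
include hx hcov hU

theorem lintegral_mul_le_tsum_two_zpow_mul (hg : Antitone g) (hu : Measurable u) :
    ∫⁻ t in s, g t * u t ≤ ∑' k : ℤ, 2 ^ k * g (x k) := by
  rw [lintegral_eq_tsum_Ioc hx hcov]
  gcongr with k
  rw [mul_comm, ← hU k]
  exact setLIntegral_Ioc_mul_le_of_antitone hg hu _ _

theorem tsum_two_zpow_mul_le_two_mul_lintegral (hg : Antitone g) :
    ∑' k : ℤ, 2 ^ k * g (x k) ≤ 2 * ∫⁻ t in s, g t * u t := by
  have h2 : (2 : ℝ≥0∞) * 2 ^ (-1 : ℤ) = 1 := by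
    rw [zpow_neg_one, ENNReal.mul_inv_cancel two_ne_zero ofNat_ne_top]
  calc ∑' k : ℤ, 2 ^ k * g (x k) = 2 * ∑' k : ℤ, 2 ^ k * g (x (k + 1)) := by
        rw [tsum_two_zpow_mul_add (fun k => g (x k)), ← mul_assoc, h2, one_mul]
    _ ≤ 2 * ∑' k : ℤ, ∫⁻ t in Ioc (x k) (x (k + 1)), g t * u t := by
        gcongr with k
        rw [mul_comm, ← hU k]
        exact mul_setLIntegral_Ioc_le_of_antitone hg _ _
    _ = 2 * ∫⁻ t in s, g t * u t := by rw [lintegral_eq_tsum_Ioc hx hcov]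

end Dyadic

theorem antitone_setLIntegral_Ioi (f : ℝ → ℝ≥0∞) : Antitone fun t => ∫⁻ s in Ioi t, f s :=
  fun _ _ hst => lintegral_mono_set (Ioi_subset_Ioi hst)

section Block

variable {h w : ℝ → ℝ≥0∞} {q : ℝ}

theorem setLIntegral_rpow_Ioc_mul_le_rpow_Ioi_mul (hq : 0 ≤ q) (a b : ℝ) :
    ∫⁻ s in Ioc a b, (∫⁻ y in Ioc s b, h y) ^ q * w s
      ≤ ∫⁻ s in Ioc a b, (∫⁻ y in Ioi s, h y) ^ q * w s :=
  lintegral_mono fun _ =>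
    mul_le_mul_left (rpow_le_rpow (lintegral_mono_set Ioc_subset_Ioi_self) hq) _

theorem setLIntegral_mul_rpow_le_setLIntegral_rpow_Ioi_mul (hq : 0 ≤ q) (a b : ℝ) :
    (∫⁻ s in Ioc a b, w s) * (∫⁻ y in Ioi b, h y) ^ q
      ≤ ∫⁻ s in Ioc a b, (∫⁻ y in Ioi s, h y) ^ q * w s := by
  rw [mul_comm]
  exact (lintegral_const_mul_le _ _).trans (setLIntegral_mono' measurableSet_Ioc fun s hs =>
    mul_le_mul_left (rpow_le_rpow (lintegral_mono_set (Ioi_subset_Ioi hs.2)) hq) _)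

theorem setLIntegral_rpow_Ioi_mul_le_two_rpow_mul (hq : 0 ≤ q) (hw : Measurable w) (a b : ℝ) :
    ∫⁻ s in Ioc a b, (∫⁻ y in Ioi s, h y) ^ q * w s
      ≤ 2 ^ q * ((∫⁻ s in Ioc a b, (∫⁻ y in Ioc s b, h y) ^ q * w s)
        + (∫⁻ s in Ioc a b, w s) * (∫⁻ y in Ioi b, h y) ^ q) := by
  calc ∫⁻ s in Ioc a b, (∫⁻ y in Ioi s, h y) ^ q * w s
      ≤ ∫⁻ s in Ioc a b, 2 ^ q *
          ((∫⁻ y in Ioc s b, h y) ^ q * w s + (∫⁻ y in Ioi b, h y) ^ q * w s) := by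
        refine setLIntegral_mono' measurableSet_Ioc fun s hs => ?_
        rw [← Ioc_union_Ioi_eq_Ioi hs.2, lintegral_union measurableSet_Ioi Ioc_disjoint_Ioi_same,
          ← add_mul, ← mul_assoc]
        exact mul_le_mul_left (add_rpow_le_two_rpow_mul_rpow_add_rpow _ _ hq) _
    _ = _ := by
        rw [lintegral_const_mul' _ _ (rpow_ne_top_of_nonneg hq ofNat_ne_top),
          lintegral_add_right _ (hw.const_mul _), lintegral_const_mul _ hw,
          mul_comm ((∫⁻ y in Ioi b, h y) ^ q)]

end Block

section Discretization

variable {q r : ℝ} {u w h : ℝ → ℝ≥0∞} {x : ℤ → ℝ}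
  (hx : Monotone x) (hcov : ⋃ k, Ioc (x k) (x (k + 1)) = Ioi 0)
  (hU : ∀ k : ℤ, ∫⁻ t in Ioc (x k) (x (k + 1)), u t = 2 ^ k)
include hx hcov hU

theorem tsum_two_zpow_mul_rpow_setLIntegral_Ioc_le (hq : 0 ≤ q) (hr : 0 ≤ r) :
    ∑' k : ℤ, 2 ^ k * (∫⁻ s in Ioc (x k) (x (k + 1)),
        (∫⁻ y in Ioc s (x (k + 1)), h y) ^ q * w s) ^ (r / q)
      ≤ 2 * ∫⁻ t in Ioi 0, (∫⁻ s in Ioi t, (∫⁻ y in Ioi s, h y) ^ q * w s) ^ (r / q) * u t := by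
  have hrq : 0 ≤ r / q := div_nonneg hr hq
  refine le_trans ?_ (tsum_two_zpow_mul_le_two_mul_lintegral hx hcov hU
    ((monotone_rpow_of_nonneg hrq).comp_antitone (antitone_setLIntegral_Ioi _)))
  refine ENNReal.tsum_le_tsum fun k => mul_le_mul_right (rpow_le_rpow ?_ hrq) _
  exact (setLIntegral_rpow_Ioc_mul_le_rpow_Ioi_mul hq _ _).trans
    (lintegral_mono_set Ioc_subset_Ioi_self)

theorem tsum_two_zpow_mul_rpow_mul_rpow_le (hq : 0 < q) (hr : 0 ≤ r) :
    ∑' k : ℤ, 2 ^ k * (∫⁻ s in Ioc (x k) (x (k + 1)), w s) ^ (r / q) *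
        (∫⁻ y in Ioi (x (k + 1)), h y) ^ r
      ≤ 2 * ∫⁻ t in Ioi 0, (∫⁻ s in Ioi t, (∫⁻ y in Ioi s, h y) ^ q * w s) ^ (r / q) * u t := by
  have hrq : 0 ≤ r / q := div_nonneg hr hq.le
  refine le_trans ?_ (tsum_two_zpow_mul_le_two_mul_lintegral hx hcov hU
    ((monotone_rpow_of_nonneg hrq).comp_antitone (antitone_setLIntegral_Ioi _)))
  refine ENNReal.tsum_le_tsum fun k => ?_
  rw [mul_assoc, ← mul_rpow_rpow_div hq.ne' hrq]
  refine mul_le_mul_right (rpow_le_rpow ?_ hrq) _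
  exact (setLIntegral_mul_rpow_le_setLIntegral_rpow_Ioi_mul hq.le _ _).trans
    (lintegral_mono_set Ioc_subset_Ioi_self)

theorem lintegral_le_mul_tsum_add_tsum (hq : 0 < q) (hr : 0 ≤ r) (hu : Measurable u)
    (hw : Measurable w) (hx₀ : ∀ k, 0 ≤ x k) {C : ℝ≥0∞}
    (hC : ∀ a : ℤ → ℝ≥0∞, ∑' k : ℤ, 2 ^ k * (∑' n : ℕ, a (k + n)) ^ (r / q)
      ≤ C * ∑' k : ℤ, 2 ^ k * a k ^ (r / q)) :
    ∫⁻ t in Ioi 0, (∫⁻ s in Ioi t, (∫⁻ y in Ioi s, h y) ^ q * w s) ^ (r / q) * u t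
      ≤ C * 2 ^ r * 2 ^ (r / q) *
        (∑' k : ℤ, 2 ^ k * (∫⁻ s in Ioc (x k) (x (k + 1)),
            (∫⁻ y in Ioc s (x (k + 1)), h y) ^ q * w s) ^ (r / q)
          + ∑' k : ℤ, 2 ^ k * (∫⁻ s in Ioc (x k) (x (k + 1)), w s) ^ (r / q) *
            (∫⁻ y in Ioi (x (k + 1)), h y) ^ r) := by
  have hrq : 0 ≤ r / q := div_nonneg hr hq.le
  set A : ℤ → ℝ≥0∞ := fun k =>
    ∫⁻ s in Ioc (x k) (x (k + 1)), (∫⁻ y in Ioc s (x (k + 1)), h y) ^ q * w s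
  set W : ℤ → ℝ≥0∞ := fun k => ∫⁻ s in Ioc (x k) (x (k + 1)), w s
  set B : ℤ → ℝ≥0∞ := fun k => ∫⁻ y in Ioi (x (k + 1)), h y
  have htail (k : ℤ) : ∫⁻ s in Ioi (x k), (∫⁻ y in Ioi s, h y) ^ q * w s
      ≤ ∑' n : ℕ, 2 ^ q * (A (k + n) + W (k + n) * B (k + n) ^ q) := by
    rw [setLIntegral_Ioi_eq_tsum_Ioc hx hcov (hx₀ k)]
    exact ENNReal.tsum_le_tsum fun n => setLIntegral_rpow_Ioi_mul_le_two_rpow_mul hq.le hw _ _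
  have hblock (k : ℤ) : (2 ^ q * (A k + W k * B k ^ q)) ^ (r / q)
      ≤ 2 ^ r * 2 ^ (r / q) * (A k ^ (r / q) + W k ^ (r / q) * B k ^ r) := by
    rw [mul_rpow_of_nonneg _ _ hrq, ← rpow_mul, mul_div_cancel₀ r hq.ne', mul_assoc,
      ← mul_rpow_rpow_div hq.ne' hrq]
    exact mul_le_mul_right (add_rpow_le_two_rpow_mul_rpow_add_rpow _ _ hrq) _
  calc ∫⁻ t in Ioi 0, (∫⁻ s in Ioi t, (∫⁻ y in Ioi s, h y) ^ q * w s) ^ (r / q) * u t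
      ≤ ∑' k : ℤ, 2 ^ k * (∫⁻ s in Ioi (x k), (∫⁻ y in Ioi s, h y) ^ q * w s) ^ (r / q) :=
        lintegral_mul_le_tsum_two_zpow_mul hx hcov hU
          ((monotone_rpow_of_nonneg hrq).comp_antitone (antitone_setLIntegral_Ioi _)) hu
    _ ≤ ∑' k : ℤ, 2 ^ k *
          (∑' n : ℕ, 2 ^ q * (A (k + n) + W (k + n) * B (k + n) ^ q)) ^ (r / q) :=
        ENNReal.tsum_le_tsum fun k => mul_le_mul_right (rpow_le_rpow (htail k) hrq) _
    _ ≤ C * ∑' k : ℤ, 2 ^ k * (2 ^ q * (A k + W k * B k ^ q)) ^ (r / q) := hC _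
    _ ≤ C * ∑' k : ℤ, 2 ^ k * (2 ^ r * 2 ^ (r / q) * (A k ^ (r / q) + W k ^ (r / q) * B k ^ r)) :=
        mul_le_mul_right (ENNReal.tsum_le_tsum fun k => mul_le_mul_right (hblock k) _) _
    _ = C * 2 ^ r * 2 ^ (r / q) *
          (∑' k : ℤ, 2 ^ k * A k ^ (r / q) + ∑' k : ℤ, 2 ^ k * W k ^ (r / q) * B k ^ r) := by
        rw [← ENNReal.tsum_add, ← ENNReal.tsum_mul_left, ← ENNReal.tsum_mul_left]
        exact tsum_congr fun k => by ring

end Discretization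

section Norms

variable {s : ℝ} {I S T : ℝ≥0∞}

theorem inv_two_mul_rpow_add_rpow_le (hs : 0 ≤ s) (hS : S ≤ 2 * I) (hT : T ≤ 2 * I) :
    (2 * 2 ^ s)⁻¹ * (S ^ s + T ^ s) ≤ I ^ s := by
  have hbound : S ^ s + T ^ s ≤ 2 * 2 ^ s * I ^ s := by
    rw [mul_assoc, two_mul, ← mul_rpow_of_nonneg _ _ hs]
    gcongr
  rwa [ENNReal.inv_mul_le_iff (by positivity) (by finiteness)]

theorem rpow_le_mul_rpow_add_rpow (hs : 0 ≤ s) {K : ℝ≥0∞} (h : I ≤ K * (S + T)) :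
    I ^ s ≤ K ^ s * 2 ^ s * (S ^ s + T ^ s) := by
  calc I ^ s ≤ K ^ s * (S + T) ^ s := by
        rw [← mul_rpow_of_nonneg _ _ hs]
        gcongr
    _ ≤ K ^ s * (2 ^ s * (S ^ s + T ^ s)) := by
        gcongr
        exact add_rpow_le_two_rpow_mul_rpow_add_rpow _ _ hs
    _ = K ^ s * 2 ^ s * (S ^ s + T ^ s) := (mul_assoc _ _ _).symm

end Norms

theorem lhs_discretization_two_sums_general
    (q r : ℝ) (hq : 0 < q) (hr : 0 < r)
    (u w : ℝ → ℝ≥0∞) (hu : IsWeight u) (hw : IsWeight w)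
    (x : ℤ → ℝ) (hx : StrictMono x) (hxpos : ∀ k, 0 < x k)
    (hxu : ∀ k : ℤ, (∫⁻ t in Set.Ioc 0 (x k), u t) = 2 ^ k)
    (hcov : (⋃ k : ℤ, Set.Ioc (x k) (x (k + 1))) = Set.Ioi (0 : ℝ)) :
    ∃ c₁ c₂ : ℝ≥0∞, 0 < c₁ ∧ c₂ < ∞ ∧
      ∀ h : ℝ → ℝ≥0∞, Measurable h →
        (c₁ * ((∑' k : ℤ, (2 : ℝ≥0∞) ^ (k : ℤ) *
                  (∫⁻ s in Set.Ioc (x k) (x (k + 1)),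
                    (∫⁻ y in Set.Ioc s (x (k + 1)), h y) ^ q * w s) ^ (r / q)) ^ (1 / r)
              + (∑' k : ℤ, (2 : ℝ≥0∞) ^ (k : ℤ) *
                  (∫⁻ s in Set.Ioc (x k) (x (k + 1)), w s) ^ (r / q) *
                  (∫⁻ y in Set.Ioi (x (k + 1)), h y) ^ r) ^ (1 / r))
            ≤ (∫⁻ t in Set.Ioi (0 : ℝ),
                (∫⁻ s in Set.Ioi t, (∫⁻ y in Set.Ioi s, h y) ^ q * w s) ^ (r / q)
                  * u t) ^ (1 / r)) ∧
        ((∫⁻ t in Set.Ioi (0 : ℝ),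
                (∫⁻ s in Set.Ioi t, (∫⁻ y in Set.Ioi s, h y) ^ q * w s) ^ (r / q)
                  * u t) ^ (1 / r)
            ≤ c₂ * ((∑' k : ℤ, (2 : ℝ≥0∞) ^ (k : ℤ) *
                  (∫⁻ s in Set.Ioc (x k) (x (k + 1)),
                    (∫⁻ y in Set.Ioc s (x (k + 1)), h y) ^ q * w s) ^ (r / q)) ^ (1 / r)
              + (∑' k : ℤ, (2 : ℝ≥0∞) ^ (k : ℤ) *
                  (∫⁻ s in Set.Ioc (x k) (x (k + 1)), w s) ^ (r / q) *
                  (∫⁻ y in Set.Ioi (x (k + 1)), h y) ^ r) ^ (1 / r))) := by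
  have hU := setLIntegral_Ioc_eq_two_zpow hx.monotone (fun k => (hxpos k).le) hxu
  obtain ⟨C, hC, hardy⟩ := ENNReal.exists_tsum_two_zpow_mul_rpow_tsum_le (div_pos hr hq)
  refine ⟨(2 * 2 ^ (1 / r))⁻¹, (C * 2 ^ r * 2 ^ (r / q)) ^ (1 / r) * 2 ^ (1 / r),
    ENNReal.inv_pos.2 (by finiteness), by finiteness, fun h _ => ⟨?_, ?_⟩⟩
  · exact inv_two_mul_rpow_add_rpow_le (by positivity)
      (tsum_two_zpow_mul_rpow_setLIntegral_Ioc_le hx.monotone hcov hU hq.le hr.le)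
      (tsum_two_zpow_mul_rpow_mul_rpow_le hx.monotone hcov hU hq hr.le)
  · exact rpow_le_mul_rpow_add_rpow (by positivity)
      (lintegral_le_mul_tsum_add_tsum hx.monotone hcov hU hq hr.le hu.1 hw.1
        (fun k => (hxpos k).le) hardy)

/-- discretization of the left-hand side:
`L(h) = (∫_0^∞ (∫_x^∞ (∫_t^∞ h)^q w(t)dt)^{r/q} u(x)dx)^{1/r}` is equivalent,
uniformly in `h ≥ 0`, to
`‖{2^{k/r}(∫_{x_k}^{x_{k+1}}(∫_s^{x_{k+1}} h)^q w ds)^{1/q}}‖_{ℓ^r}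
  + ‖{2^{k/r}(∫_{x_k}^{x_{k+1}} w)^{1/q} ∫_{x_{k+1}}^∞ h}‖_{ℓ^r}`. -/
theorem lhs_discretization_two_sums
    (q r : ℝ) (hq : 0 < q) (hr : 0 < r)
    (u v w : ℝ → ℝ≥0∞) (hu : IsWeight u) (hv : IsWeight v) (hw : IsWeight w)
    (x : ℤ → ℝ) (hx : StrictMono x) (hxpos : ∀ k, 0 < x k)
    (hxu : ∀ k : ℤ, (∫⁻ t in Set.Ioc 0 (x k), u t) = 2 ^ k)
    (hcov : (⋃ k : ℤ, Set.Ioc (x k) (x (k + 1))) = Set.Ioi (0 : ℝ)) :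
    ∃ c₁ c₂ : ℝ≥0∞, 0 < c₁ ∧ c₂ < ∞ ∧
      ∀ h : ℝ → ℝ≥0∞, Measurable h →
        (c₁ * ((∑' k : ℤ, (2 : ℝ≥0∞) ^ (k : ℤ) *
                  (∫⁻ s in Set.Ioc (x k) (x (k + 1)),
                    (∫⁻ y in Set.Ioc s (x (k + 1)), h y) ^ q * w s) ^ (r / q)) ^ (1 / r)
              + (∑' k : ℤ, (2 : ℝ≥0∞) ^ (k : ℤ) *
                  (∫⁻ s in Set.Ioc (x k) (x (k + 1)), w s) ^ (r / q) *
                  (∫⁻ y in Set.Ioi (x (k + 1)), h y) ^ r) ^ (1 / r))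
            ≤ (∫⁻ t in Set.Ioi (0 : ℝ),
                (∫⁻ s in Set.Ioi t, (∫⁻ y in Set.Ioi s, h y) ^ q * w s) ^ (r / q)
                  * u t) ^ (1 / r)) ∧
        ((∫⁻ t in Set.Ioi (0 : ℝ),
                (∫⁻ s in Set.Ioi t, (∫⁻ y in Set.Ioi s, h y) ^ q * w s) ^ (r / q)
                  * u t) ^ (1 / r)
            ≤ c₂ * ((∑' k : ℤ, (2 : ℝ≥0∞) ^ (k : ℤ) *
                  (∫⁻ s in Set.Ioc (x k) (x (k + 1)),
                    (∫⁻ y in Set.Ioc s (x (k + 1)), h y) ^ q * w s) ^ (r / q)) ^ (1 / r)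
              + (∑' k : ℤ, (2 : ℝ≥0∞) ^ (k : ℤ) *
                  (∫⁻ s in Set.Ioc (x k) (x (k + 1)), w s) ^ (r / q) *
                  (∫⁻ y in Set.Ioi (x (k + 1)), h y) ^ r) ^ (1 / r))) :=
  lhs_discretization_two_sums_general q r hq hr u w hu hw x hx hxpos hxu hcov
end

section
/- Let 0 < q, r < ∞, u, v, w weights on (0,∞), and {x_k} a covering sequence with ∫_0^{x_k} u = 2^k. Then, uniformly in nonnegative measurable h, L(h) := (∫_0^∞ (∫_x^∞ (∫_t^∞ h)^q w(t) dt)^{r/q} u(x) dx)^{1/r} ≈ ‖{2^{k/r} (∫_{x_k}^{x_{k+1}} (∫_s^{x_{k+1}} h)^q w(s) ds)^{1/q}}‖_{ℓ^r} + (∫_0^∞ u(t) sup_{s>t} (∫_t^s w)^{r/q} (∫_s^∞ h)^r dt)^{1/r}. -/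
open MeasureTheory ENNReal Set
open scoped Function

/-!
Cut `(0,∞)` into the blocks `I_k = (x_k, x_{k+1}]`, on which `u` has mass `2^k`, and write
`F(t) = ∫_t^∞ (∫_s^∞ h)^q w`, so that `L(h)^r = ∫_0^∞ F^{r/q} u`.

Lower bound: the supremal integrand at `t` is at most `F(t)^{r/q}`, because
`(∫_t^s w) (∫_s^∞ h)^q ≤ ∫_t^s (∫_y^∞ h)^q w(y) dy`; and for `t ∈ I_k` the block term of index
`k + 1` is at most `F(t)`, so integrating over `I_k` against `u` bounds the discrete sum by
`2 L(h)^r`.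

Upper bound: `F` is decreasing, so `L(h)^r ≤ Σ_k 2^k F(x_k)^{r/q}`. Splitting `∫_s^∞ h` at
`x_{j+1}` gives `F(x_k) ≤ 2^q Σ_{j ≥ k} a_j`, where `a_j` is the local block integral plus
`(∫_{x_{j+1}}^∞ h)^q ∫_{I_j} w`. A discrete Hardy inequality with geometric weights removes the
tail sums; the first part of `a_j` is the discrete sum, and the second is dominated by the
supremal integrand at `t ∈ I_{j-1}` with `s = x_{j+1}`.
-/

namespace ENNReal

theorem add_rpow_le_two_rpow_mul (a b : ℝ≥0∞) {p : ℝ} (hp : 0 ≤ p) :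
    (a + b) ^ p ≤ 2 ^ p * (a ^ p + b ^ p) := by
  calc (a + b) ^ p ≤ (2 * max a b) ^ p :=
        rpow_le_rpow (by rw [two_mul]; exact add_le_add (le_max_left _ _) (le_max_right _ _)) hp
    _ = 2 ^ p * max a b ^ p := mul_rpow_of_nonneg _ _ hp
    _ ≤ 2 ^ p * (a ^ p + b ^ p) := by
        gcongr
        rcases le_total a b with hab | hab
        · rw [max_eq_right hab]; exact le_add_self
        · rw [max_eq_left hab]; exact le_self_add

theorem tsum_rpow_le_geometric_mul {γ : ℝ≥0∞} (hγ₀ : γ ≠ 0) (hγ : γ ≠ ⊤) {ρ : ℝ} (hρ : 0 < ρ)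
    (a : ℕ → ℝ≥0∞) :
    (∑' n, a n) ^ ρ ≤ (∑' n : ℕ, (γ⁻¹ ^ ρ⁻¹) ^ n) ^ ρ * ∑' n, γ ^ n * a n ^ ρ := by
  set T := ∑' n, γ ^ n * a n ^ ρ
  have ha : ∀ n, a n ≤ (γ⁻¹ ^ ρ⁻¹) ^ n * T ^ ρ⁻¹ := fun n => by
    have hn : a n ^ ρ ≤ (γ ^ n)⁻¹ * T :=
      (mul_le_iff_le_inv (pow_ne_zero n hγ₀) (pow_ne_top hγ)).1 (ENNReal.le_tsum n)
    calc a n = (a n ^ ρ) ^ ρ⁻¹ := (rpow_rpow_inv hρ.ne' _).symm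
      _ ≤ ((γ ^ n)⁻¹ * T) ^ ρ⁻¹ := rpow_le_rpow hn (inv_nonneg.2 hρ.le)
      _ = (γ⁻¹ ^ ρ⁻¹) ^ n * T ^ ρ⁻¹ := by
        rw [mul_rpow_of_nonneg _ _ (inv_nonneg.2 hρ.le), ENNReal.inv_pow, ← rpow_natCast,
          ← rpow_natCast, ← rpow_mul, ← rpow_mul, mul_comm (n : ℝ)]
  calc (∑' n, a n) ^ ρ ≤ ((∑' n : ℕ, (γ⁻¹ ^ ρ⁻¹) ^ n) * T ^ ρ⁻¹) ^ ρ :=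
        rpow_le_rpow ((ENNReal.tsum_le_tsum ha).trans_eq ENNReal.tsum_mul_right) hρ.le
    _ = (∑' n : ℕ, (γ⁻¹ ^ ρ⁻¹) ^ n) ^ ρ * T := by
        rw [mul_rpow_of_nonneg _ _ hρ.le, rpow_inv_rpow hρ.ne']

theorem exists_tsum_zpow_mul_tsum_rpow_le {b : ℝ≥0∞} (hb : 1 < b) (hb' : b ≠ ⊤) {ρ : ℝ}
    (hρ : 0 < ρ) :
    ∃ K < ⊤, ∀ a : ℤ → ℝ≥0∞,
      ∑' k : ℤ, b ^ k * (∑' n : ℕ, a (k + n)) ^ ρ ≤ K * ∑' k : ℤ, b ^ k * a k ^ ρ := by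
  -- any intermediate weight `1 < γ < b` works: `γ > 1` sums the tails, `γ < b` resums over `k`
  set γ := b ^ (2⁻¹ : ℝ)
  have hb₀ : b ≠ 0 := (zero_lt_one.trans hb).ne'
  have hγ₀ : γ ≠ 0 := (rpow_pos (zero_lt_one.trans hb) hb').ne'
  have hγ : γ ≠ ⊤ := rpow_ne_top_of_nonneg (by norm_num) hb'
  have hγ₁ : 1 < γ := one_lt_rpow hb (by norm_num)
  have hγb : γ < b := by
    simpa using rpow_lt_rpow_of_exponent_lt hb hb' (by norm_num : (2⁻¹ : ℝ) < 1)
  set C := ∑' n : ℕ, (γ⁻¹ ^ ρ⁻¹) ^ n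
  set D := ∑' n : ℕ, (γ * b⁻¹) ^ n
  have hC : C < ⊤ := tsum_geometric_lt_top.2
    (rpow_lt_one (ENNReal.inv_lt_one.2 hγ₁) (inv_pos.2 hρ))
  have hD : D < ⊤ := tsum_geometric_lt_top.2 (by
    rwa [← div_eq_mul_inv, ENNReal.div_lt_iff (Or.inl hb₀) (Or.inl hb'), one_mul])
  refine ⟨C ^ ρ * D, mul_lt_top (rpow_lt_top_of_nonneg hρ.le hC.ne) hD, fun a => ?_⟩
  have hweight : ∀ (k : ℤ) (n : ℕ), b ^ k * γ ^ n = (γ * b⁻¹) ^ n * b ^ (k + n) := fun k n => by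
    have hcancel : b⁻¹ ^ n * b ^ n = 1 := by
      rw [← ENNReal.inv_pow, ENNReal.inv_mul_cancel (pow_ne_zero n hb₀) (pow_ne_top hb')]
    rw [ENNReal.zpow_add hb₀ hb', zpow_natCast, mul_pow]
    calc b ^ k * γ ^ n = γ ^ n * b ^ k * (b⁻¹ ^ n * b ^ n) := by rw [hcancel, mul_one, mul_comm]
      _ = _ := by ring
  calc ∑' k : ℤ, b ^ k * (∑' n : ℕ, a (k + n)) ^ ρ
      ≤ ∑' k : ℤ, b ^ k * (C ^ ρ * ∑' n : ℕ, γ ^ n * a (k + n) ^ ρ) :=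
        ENNReal.tsum_le_tsum fun k =>
          mul_le_mul_right (tsum_rpow_le_geometric_mul hγ₀ hγ hρ _) _
    _ = C ^ ρ * ∑' n : ℕ, (γ * b⁻¹) ^ n * ∑' k : ℤ, b ^ (k + n) * a (k + n) ^ ρ := by
        simp_rw [mul_left_comm _ (C ^ ρ), ENNReal.tsum_mul_left, ← ENNReal.tsum_mul_left]
        rw [ENNReal.tsum_comm]
        refine tsum_congr fun n => tsum_congr fun k => ?_
        rw [← mul_assoc (b ^ k), hweight, mul_assoc]
    _ = C ^ ρ * D * ∑' k : ℤ, b ^ k * a k ^ ρ := by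
        have hshift : ∀ n : ℕ, ∑' k : ℤ, b ^ (k + n) * a (k + n) ^ ρ = ∑' k : ℤ, b ^ k * a k ^ ρ :=
          fun n => (Equiv.addRight (n : ℤ)).tsum_eq (fun j => b ^ j * a j ^ ρ)
        simp_rw [hshift]
        rw [ENNReal.tsum_mul_right, mul_assoc]

theorem rpow_div_mul_rpow_eq {q r : ℝ} (hq : q ≠ 0) (hr : 0 ≤ r / q) (a b : ℝ≥0∞) :
    a ^ (r / q) * b ^ r = (a * b ^ q) ^ (r / q) := by
  rw [mul_rpow_of_nonneg _ _ hr, ← rpow_mul, mul_div_cancel₀ r hq]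

theorem rpow_add_rpow_le_of_le_two_mul {a b c : ℝ≥0∞} {p : ℝ} (ha : a ≤ 2 * c)
    (hb : b ≤ c) (hp : 0 ≤ p) : a ^ p + b ^ p ≤ (2 ^ p + 1) * c ^ p := by
  calc a ^ p + b ^ p ≤ (2 * c) ^ p + c ^ p := add_le_add (rpow_le_rpow ha hp) (rpow_le_rpow hb hp)
    _ = (2 ^ p + 1) * c ^ p := by rw [mul_rpow_of_nonneg _ _ hp]; ring

theorem rpow_le_mul_rpow_add_rpow {a b c M : ℝ≥0∞} {p : ℝ} (h : c ≤ M * (a + b))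
    (hp : 0 ≤ p) : c ^ p ≤ M ^ p * 2 ^ p * (a ^ p + b ^ p) := by
  calc c ^ p ≤ M ^ p * (a + b) ^ p := (rpow_le_rpow h hp).trans_eq (mul_rpow_of_nonneg _ _ hp)
    _ ≤ M ^ p * (2 ^ p * (a ^ p + b ^ p)) := by gcongr; exact add_rpow_le_two_rpow_mul _ _ hp
    _ = M ^ p * 2 ^ p * (a ^ p + b ^ p) := (mul_assoc _ _ _).symm

end ENNReal

section Partition

variable {x : ℤ → ℝ}

theorem pairwise_disjoint_Ioc_add_one (hx : Monotone x) :
    Pairwise (Disjoint on fun k : ℤ => Ioc (x k) (x (k + 1))) := by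
  simpa only [Order.succ_eq_add_one] using hx.pairwise_disjoint_on_Ioc_succ

theorem iUnion_Ioc_add_natCast (hx : Monotone x) (hxpos : ∀ k, 0 < x k)
    (hcov : ⋃ k : ℤ, Ioc (x k) (x (k + 1)) = Ioi 0) (k : ℤ) :
    ⋃ n : ℕ, Ioc (x (k + n)) (x (k + n + 1)) = Ioi (x k) := by
  refine subset_antisymm (iUnion_subset fun n t ht => (hx (by omega)).trans_lt ht.1) fun t ht => ?_
  obtain ⟨j, hj⟩ := mem_iUnion.1 (hcov ▸ (hxpos k).trans ht : t ∈ ⋃ k : ℤ, Ioc (x k) (x (k + 1)))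
  have hkj : k ≤ j := by
    by_contra! hjk
    exact (hj.2.trans (hx (by omega))).not_gt ht
  exact mem_iUnion.2
    ⟨(j - k).toNat, by rwa [Int.toNat_of_nonneg (sub_nonneg.2 hkj), add_sub_cancel]⟩

theorem lintegral_Ioi_zero_eq_tsum (hx : Monotone x)
    (hcov : ⋃ k : ℤ, Ioc (x k) (x (k + 1)) = Ioi 0) (f : ℝ → ℝ≥0∞) :
    ∫⁻ t in Ioi 0, f t = ∑' k : ℤ, ∫⁻ t in Ioc (x k) (x (k + 1)), f t := by
  rw [← hcov, lintegral_iUnion (fun _ => measurableSet_Ioc) (pairwise_disjoint_Ioc_add_one hx)]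

theorem lintegral_Ioi_eq_tsum (hx : Monotone x) (hxpos : ∀ k, 0 < x k)
    (hcov : ⋃ k : ℤ, Ioc (x k) (x (k + 1)) = Ioi 0) (f : ℝ → ℝ≥0∞) (k : ℤ) :
    ∫⁻ t in Ioi (x k), f t = ∑' n : ℕ, ∫⁻ t in Ioc (x (k + n)) (x (k + n + 1)), f t := by
  have hdisj : Pairwise (Disjoint on fun n : ℕ => Ioc (x (k + n)) (x (k + n + 1))) := by
    have := (hx.comp fun m n (hmn : m ≤ n) => by omega : Monotone fun n : ℕ => x (k + n))
    simpa only [Order.succ_eq_add_one, Function.comp_apply, Nat.cast_add, Nat.cast_one,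
      ← add_assoc] using this.pairwise_disjoint_on_Ioc_succ
  rw [← iUnion_Ioc_add_natCast hx hxpos hcov k,
    lintegral_iUnion (fun _ => measurableSet_Ioc) hdisj]

theorem lintegral_Ioc_eq_two_zpow {u : ℝ → ℝ≥0∞} (hx : Monotone x) (hxpos : ∀ k, 0 < x k)
    (hxu : ∀ k : ℤ, ∫⁻ t in Ioc 0 (x k), u t = 2 ^ k) (k : ℤ) :
    ∫⁻ t in Ioc (x k) (x (k + 1)), u t = 2 ^ k := by
  have hsplit : (2 : ℝ≥0∞) ^ k + 2 ^ k = 2 ^ k + ∫⁻ t in Ioc (x k) (x (k + 1)), u t := by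
    rw [← hxu k, ← lintegral_union measurableSet_Ioc (Ioc_disjoint_Ioc_of_le le_rfl),
      Ioc_union_Ioc_eq_Ioc (hxpos k).le (hx (by omega)), hxu, hxu,
      ENNReal.zpow_add two_ne_zero ofNat_ne_top, zpow_one, mul_two]
  exact ((ENNReal.add_right_inj (zpow_ne_top two_ne_zero ofNat_ne_top k)).1 hsplit).symm

end Partition

section Blocks

variable {x : ℤ → ℝ} {u g : ℝ → ℝ≥0∞} {c : ℤ → ℝ≥0∞}

theorem lintegral_mul_le_tsum_of_le_on_Ioc (hx : Monotone x) (hxpos : ∀ k, 0 < x k)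
    (hcov : ⋃ k : ℤ, Ioc (x k) (x (k + 1)) = Ioi 0) (hu : Measurable u)
    (hxu : ∀ k : ℤ, ∫⁻ t in Ioc 0 (x k), u t = 2 ^ k)
    (hgc : ∀ k, ∀ t ∈ Ioc (x k) (x (k + 1)), g t ≤ c k) :
    ∫⁻ t in Ioi 0, g t * u t ≤ ∑' k : ℤ, 2 ^ k * c k := by
  rw [lintegral_Ioi_zero_eq_tsum hx hcov]
  refine ENNReal.tsum_le_tsum fun k => ?_
  calc ∫⁻ t in Ioc (x k) (x (k + 1)), g t * u t
      ≤ ∫⁻ t in Ioc (x k) (x (k + 1)), c k * u t :=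
        setLIntegral_mono' measurableSet_Ioc fun t ht => mul_le_mul_left (hgc k t ht) _
    _ = 2 ^ k * c k := by
        rw [lintegral_const_mul _ hu, lintegral_Ioc_eq_two_zpow hx hxpos hxu, mul_comm]

theorem tsum_le_two_mul_lintegral_of_le_on_Ioc (hx : Monotone x) (hxpos : ∀ k, 0 < x k)
    (hcov : ⋃ k : ℤ, Ioc (x k) (x (k + 1)) = Ioi 0) (hu : Measurable u)
    (hxu : ∀ k : ℤ, ∫⁻ t in Ioc 0 (x k), u t = 2 ^ k)
    (hcg : ∀ k, ∀ t ∈ Ioc (x k) (x (k + 1)), c (k + 1) ≤ g t) :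
    ∑' k : ℤ, 2 ^ k * c k ≤ 2 * ∫⁻ t in Ioi 0, g t * u t := by
  rw [← (Equiv.addRight (1 : ℤ)).tsum_eq, lintegral_Ioi_zero_eq_tsum hx hcov,
    ← ENNReal.tsum_mul_left]
  refine ENNReal.tsum_le_tsum fun k => ?_
  calc (2 : ℝ≥0∞) ^ (k + 1) * c (k + 1) = 2 * ∫⁻ t in Ioc (x k) (x (k + 1)), c (k + 1) * u t := by
        rw [lintegral_const_mul _ hu, lintegral_Ioc_eq_two_zpow hx hxpos hxu,
          ENNReal.zpow_add two_ne_zero ofNat_ne_top, zpow_one]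
        ring
    _ ≤ 2 * ∫⁻ t in Ioc (x k) (x (k + 1)), g t * u t := by
        gcongr 2 * ?_
        exact setLIntegral_mono' measurableSet_Ioc fun t ht => mul_le_mul_left (hcg k t ht) _

end Blocks

/-- The `r`-th power of `L(h)`. -/
noncomputable def iteratedHardyIntegral (q r : ℝ) (u w h : ℝ → ℝ≥0∞) : ℝ≥0∞ :=
  ∫⁻ t in Ioi 0, (∫⁻ s in Ioi t, (∫⁻ y in Ioi s, h y) ^ q * w s) ^ (r / q) * u t

noncomputable def blockSum (q r : ℝ) (w : ℝ → ℝ≥0∞) (x : ℤ → ℝ) (h : ℝ → ℝ≥0∞) : ℝ≥0∞ :=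
  ∑' k : ℤ, 2 ^ k *
    (∫⁻ s in Ioc (x k) (x (k + 1)), (∫⁻ y in Ioc s (x (k + 1)), h y) ^ q * w s) ^ (r / q)

noncomputable def supremalIntegral (q r : ℝ) (u w h : ℝ → ℝ≥0∞) : ℝ≥0∞ :=
  ∫⁻ t in Ioi 0, u t *
    ⨆ s ∈ Ioi t, (∫⁻ y in Ioc t s, w y) ^ (r / q) * (∫⁻ y in Ioi s, h y) ^ r

/-- The sequence `a_k` of the upper bound. -/
noncomputable def blockMajorant (q : ℝ) (w : ℝ → ℝ≥0∞) (x : ℤ → ℝ) (h : ℝ → ℝ≥0∞) (k : ℤ) : ℝ≥0∞ :=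
  (∫⁻ s in Ioc (x k) (x (k + 1)), (∫⁻ y in Ioc s (x (k + 1)), h y) ^ q * w s)
    + (∫⁻ y in Ioi (x (k + 1)), h y) ^ q * ∫⁻ s in Ioc (x k) (x (k + 1)), w s

section Estimates

variable {q r : ℝ} {u w h : ℝ → ℝ≥0∞} {x : ℤ → ℝ}

theorem lintegral_Ioc_mul_rpow_tail_le (hq : 0 ≤ q) (hw : Measurable w) (t s : ℝ) :
    (∫⁻ y in Ioc t s, w y) * (∫⁻ y in Ioi s, h y) ^ q
      ≤ ∫⁻ y in Ioi t, (∫⁻ z in Ioi y, h z) ^ q * w y := by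
  calc (∫⁻ y in Ioc t s, w y) * (∫⁻ y in Ioi s, h y) ^ q
      = ∫⁻ y in Ioc t s, (∫⁻ z in Ioi s, h z) ^ q * w y := by
        rw [lintegral_const_mul _ hw, mul_comm]
    _ ≤ ∫⁻ y in Ioc t s, (∫⁻ z in Ioi y, h z) ^ q * w y :=
        setLIntegral_mono' measurableSet_Ioc fun y hy =>
          mul_le_mul_left (rpow_le_rpow (lintegral_mono_set (Ioi_subset_Ioi hy.2)) hq) _
    _ ≤ ∫⁻ y in Ioi t, (∫⁻ z in Ioi y, h z) ^ q * w y := lintegral_mono_set Ioc_subset_Ioi_self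

theorem supremalIntegral_le (hq : 0 < q) (hr : 0 ≤ r) (hw : Measurable w) :
    supremalIntegral q r u w h ≤ iteratedHardyIntegral q r u w h := by
  have hρ : 0 ≤ r / q := div_nonneg hr hq.le
  refine lintegral_mono fun t => ?_
  rw [mul_comm]
  gcongr
  refine iSup₂_le fun s _ => ?_
  rw [rpow_div_mul_rpow_eq hq.ne' hρ]
  exact rpow_le_rpow (lintegral_Ioc_mul_rpow_tail_le hq.le hw t s) hρ

theorem blockSum_le (hq : 0 ≤ q) (hr : 0 ≤ r) (hx : Monotone x) (hxpos : ∀ k, 0 < x k)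
    (hcov : ⋃ k : ℤ, Ioc (x k) (x (k + 1)) = Ioi 0) (hu : Measurable u)
    (hxu : ∀ k : ℤ, ∫⁻ t in Ioc 0 (x k), u t = 2 ^ k) :
    blockSum q r w x h ≤ 2 * iteratedHardyIntegral q r u w h := by
  refine tsum_le_two_mul_lintegral_of_le_on_Ioc hx hxpos hcov hu hxu fun k t ht => ?_
  refine rpow_le_rpow ?_ (div_nonneg hr hq)
  calc ∫⁻ s in Ioc (x (k + 1)) (x (k + 1 + 1)), (∫⁻ y in Ioc s (x (k + 1 + 1)), h y) ^ q * w s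
      ≤ ∫⁻ s in Ioc (x (k + 1)) (x (k + 1 + 1)), (∫⁻ y in Ioi s, h y) ^ q * w s :=
        lintegral_mono fun s => by gcongr; exact Ioc_subset_Ioi_self
    _ ≤ ∫⁻ s in Ioi t, (∫⁻ y in Ioi s, h y) ^ q * w s :=
        lintegral_mono_set fun s hs => ht.2.trans_lt hs.1

theorem lintegral_Ioc_rpow_tail_mul_le (hq : 0 ≤ q) (hw : Measurable w) (a b : ℝ) :
    ∫⁻ s in Ioc a b, (∫⁻ y in Ioi s, h y) ^ q * w s
      ≤ 2 ^ q * ((∫⁻ s in Ioc a b, (∫⁻ y in Ioc s b, h y) ^ q * w s)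
        + (∫⁻ y in Ioi b, h y) ^ q * ∫⁻ s in Ioc a b, w s) := by
  have hsplit : ∀ s ∈ Ioc a b,
      ∫⁻ y in Ioi s, h y = (∫⁻ y in Ioc s b, h y) + ∫⁻ y in Ioi b, h y := fun s hs => by
    rw [← Ioc_union_Ioi_eq_Ioi hs.2, lintegral_union measurableSet_Ioi (Ioc_disjoint_Ioi le_rfl)]
  calc ∫⁻ s in Ioc a b, (∫⁻ y in Ioi s, h y) ^ q * w s
      ≤ ∫⁻ s in Ioc a b, 2 ^ q *
          ((∫⁻ y in Ioc s b, h y) ^ q * w s + (∫⁻ y in Ioi b, h y) ^ q * w s) :=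
        setLIntegral_mono' measurableSet_Ioc fun s hs => by
          rw [hsplit s hs, ← add_mul, ← mul_assoc]
          exact mul_le_mul_left (ENNReal.add_rpow_le_two_rpow_mul _ _ hq) _
    _ = 2 ^ q * ((∫⁻ s in Ioc a b, (∫⁻ y in Ioc s b, h y) ^ q * w s)
        + (∫⁻ y in Ioi b, h y) ^ q * ∫⁻ s in Ioc a b, w s) := by
        rw [lintegral_const_mul' _ _ (rpow_ne_top_of_nonneg hq ofNat_ne_top),
          lintegral_add_right _ (hw.const_mul _), lintegral_const_mul _ hw]

theorem iteratedHardyIntegral_le_tsum (hq : 0 < q) (hr : 0 ≤ r) (hw : Measurable w)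
    (hx : Monotone x) (hxpos : ∀ k, 0 < x k) (hcov : ⋃ k : ℤ, Ioc (x k) (x (k + 1)) = Ioi 0)
    (hu : Measurable u) (hxu : ∀ k : ℤ, ∫⁻ t in Ioc 0 (x k), u t = 2 ^ k) :
    iteratedHardyIntegral q r u w h
      ≤ 2 ^ r * ∑' k : ℤ, 2 ^ k * (∑' n : ℕ, blockMajorant q w x h (k + n)) ^ (r / q) := by
  have hρ : 0 ≤ r / q := div_nonneg hr hq.le
  have htail : ∀ k, ∫⁻ s in Ioi (x k), (∫⁻ y in Ioi s, h y) ^ q * w s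
      ≤ 2 ^ q * ∑' n : ℕ, blockMajorant q w x h (k + n) := fun k => by
    rw [lintegral_Ioi_eq_tsum hx hxpos hcov, ← ENNReal.tsum_mul_left]
    exact ENNReal.tsum_le_tsum fun n => lintegral_Ioc_rpow_tail_mul_le hq.le hw _ _
  calc iteratedHardyIntegral q r u w h
      ≤ ∑' k : ℤ, 2 ^ k * (∫⁻ s in Ioi (x k), (∫⁻ y in Ioi s, h y) ^ q * w s) ^ (r / q) :=
        lintegral_mul_le_tsum_of_le_on_Ioc hx hxpos hcov hu hxu fun k t ht =>
          rpow_le_rpow (lintegral_mono_set (Ioi_subset_Ioi ht.1.le)) hρ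
    _ ≤ ∑' k : ℤ, 2 ^ k * (2 ^ q * ∑' n : ℕ, blockMajorant q w x h (k + n)) ^ (r / q) := by
        gcongr with k
        exact htail k
    _ = 2 ^ r * ∑' k : ℤ, 2 ^ k * (∑' n : ℕ, blockMajorant q w x h (k + n)) ^ (r / q) := by
        rw [← ENNReal.tsum_mul_left]
        refine tsum_congr fun k => ?_
        rw [mul_rpow_of_nonneg _ _ hρ, ← rpow_mul, mul_div_cancel₀ r hq.ne', mul_left_comm]

theorem tsum_rpow_tail_mul_le_two_mul_supremalIntegral (hq : 0 < q) (hr : 0 ≤ r)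
    (hx : StrictMono x) (hxpos : ∀ k, 0 < x k) (hcov : ⋃ k : ℤ, Ioc (x k) (x (k + 1)) = Ioi 0)
    (hu : Measurable u) (hxu : ∀ k : ℤ, ∫⁻ t in Ioc 0 (x k), u t = 2 ^ k) :
    ∑' k : ℤ, 2 ^ k *
        ((∫⁻ y in Ioi (x (k + 1)), h y) ^ q * ∫⁻ s in Ioc (x k) (x (k + 1)), w s) ^ (r / q)
      ≤ 2 * supremalIntegral q r u w h := by
  have hρ : 0 ≤ r / q := div_nonneg hr hq.le
  unfold supremalIntegral
  simp_rw [mul_comm (u _)]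
  refine tsum_le_two_mul_lintegral_of_le_on_Ioc hx.monotone hxpos hcov hu hxu fun k t ht => ?_
  refine le_iSup₂_of_le (x (k + 1 + 1)) (ht.2.trans_lt (hx (by omega))) ?_
  rw [rpow_div_mul_rpow_eq hq.ne' hρ, mul_comm]
  gcongr
  exact ht.2

theorem tsum_blockMajorant_rpow_le (hq : 0 < q) (hr : 0 ≤ r)
    (hx : StrictMono x) (hxpos : ∀ k, 0 < x k) (hcov : ⋃ k : ℤ, Ioc (x k) (x (k + 1)) = Ioi 0)
    (hu : Measurable u) (hxu : ∀ k : ℤ, ∫⁻ t in Ioc 0 (x k), u t = 2 ^ k) :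
    ∑' k : ℤ, 2 ^ k * blockMajorant q w x h k ^ (r / q)
      ≤ 2 ^ (r / q) * (2 * (blockSum q r w x h + supremalIntegral q r u w h)) := by
  have hρ : 0 ≤ r / q := div_nonneg hr hq.le
  calc ∑' k : ℤ, 2 ^ k * blockMajorant q w x h k ^ (r / q)
      ≤ ∑' k : ℤ, 2 ^ (r / q) * (2 ^ k *
          (∫⁻ s in Ioc (x k) (x (k + 1)), (∫⁻ y in Ioc s (x (k + 1)), h y) ^ q * w s) ^ (r / q)
        + 2 ^ k * ((∫⁻ y in Ioi (x (k + 1)), h y) ^ q * ∫⁻ s in Ioc (x k) (x (k + 1)), w s)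
          ^ (r / q)) := by
        refine ENNReal.tsum_le_tsum fun k => ?_
        rw [← mul_add, mul_left_comm]
        exact mul_le_mul_right (ENNReal.add_rpow_le_two_rpow_mul _ _ hρ) _
    _ = 2 ^ (r / q) * (blockSum q r w x h + ∑' k : ℤ, 2 ^ k *
          ((∫⁻ y in Ioi (x (k + 1)), h y) ^ q * ∫⁻ s in Ioc (x k) (x (k + 1)), w s) ^ (r / q)) := by
        rw [ENNReal.tsum_mul_left, ENNReal.tsum_add]
        rfl
    _ ≤ 2 ^ (r / q) * (blockSum q r w x h + 2 * supremalIntegral q r u w h) := by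
        gcongr
        exact tsum_rpow_tail_mul_le_two_mul_supremalIntegral hq hr hx hxpos hcov hu hxu
    _ ≤ 2 ^ (r / q) * (2 * (blockSum q r w x h + supremalIntegral q r u w h)) := by
        rw [mul_add 2]
        gcongr
        exact le_mul_of_one_le_left' one_le_two

theorem exists_iteratedHardyIntegral_le (hq : 0 < q) (hr : 0 < r) (hw : Measurable w)
    (hx : StrictMono x) (hxpos : ∀ k, 0 < x k) (hcov : ⋃ k : ℤ, Ioc (x k) (x (k + 1)) = Ioi 0)
    (hu : Measurable u) (hxu : ∀ k : ℤ, ∫⁻ t in Ioc 0 (x k), u t = 2 ^ k) :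
    ∃ M < ⊤, ∀ h, iteratedHardyIntegral q r u w h
      ≤ M * (blockSum q r w x h + supremalIntegral q r u w h) := by
  obtain ⟨K, hK, hardy⟩ :=
    ENNReal.exists_tsum_zpow_mul_tsum_rpow_le one_lt_two ofNat_ne_top (div_pos hr hq)
  refine ⟨2 ^ r * K * (2 ^ (r / q) * 2), ?_, fun h => ?_⟩
  · exact mul_lt_top (mul_lt_top (rpow_lt_top_of_nonneg hr.le ofNat_ne_top) hK)
      (mul_lt_top (rpow_lt_top_of_nonneg (div_pos hr hq).le ofNat_ne_top) ofNat_lt_top)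
  calc iteratedHardyIntegral q r u w h
      ≤ 2 ^ r * ∑' k : ℤ, 2 ^ k * (∑' n : ℕ, blockMajorant q w x h (k + n)) ^ (r / q) :=
        iteratedHardyIntegral_le_tsum hq hr.le hw hx.monotone hxpos hcov hu hxu
    _ ≤ 2 ^ r * (K * ∑' k : ℤ, 2 ^ k * blockMajorant q w x h k ^ (r / q)) := by
        gcongr
        exact hardy _
    _ ≤ 2 ^ r * (K * (2 ^ (r / q) * (2 * (blockSum q r w x h + supremalIntegral q r u w h)))) := by
        gcongr
        exact tsum_blockMajorant_rpow_le hq hr.le hx hxpos hcov hu hxu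
    _ = 2 ^ r * K * (2 ^ (r / q) * 2) * (blockSum q r w x h + supremalIntegral q r u w h) := by
        ring

end Estimates

theorem lhs_discretization_sum_plus_sup_general
    (q r : ℝ) (hq : 0 < q) (hr : 0 < r)
    (u w : ℝ → ℝ≥0∞) (hu : IsWeight u) (hw : IsWeight w)
    (x : ℤ → ℝ) (hx : StrictMono x) (hxpos : ∀ k, 0 < x k)
    (hxu : ∀ k : ℤ, (∫⁻ t in Set.Ioc 0 (x k), u t) = 2 ^ k)
    (hcov : (⋃ k : ℤ, Set.Ioc (x k) (x (k + 1))) = Set.Ioi (0 : ℝ)) :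
    ∃ c₁ c₂ : ℝ≥0∞, 0 < c₁ ∧ c₂ < ∞ ∧
      ∀ h : ℝ → ℝ≥0∞, Measurable h →
        (c₁ * ((∑' k : ℤ, (2 : ℝ≥0∞) ^ (k : ℤ) *
                  (∫⁻ s in Set.Ioc (x k) (x (k + 1)),
                    (∫⁻ y in Set.Ioc s (x (k + 1)), h y) ^ q * w s) ^ (r / q)) ^ (1 / r)
              + (∫⁻ t in Set.Ioi (0 : ℝ),
                  u t * ⨆ s ∈ Set.Ioi t,
                    (∫⁻ y in Set.Ioc t s, w y) ^ (r / q) *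
                      (∫⁻ y in Set.Ioi s, h y) ^ r) ^ (1 / r))
            ≤ (∫⁻ t in Set.Ioi (0 : ℝ),
                (∫⁻ s in Set.Ioi t, (∫⁻ y in Set.Ioi s, h y) ^ q * w s) ^ (r / q)
                  * u t) ^ (1 / r)) ∧
        ((∫⁻ t in Set.Ioi (0 : ℝ),
                (∫⁻ s in Set.Ioi t, (∫⁻ y in Set.Ioi s, h y) ^ q * w s) ^ (r / q)
                  * u t) ^ (1 / r)
            ≤ c₂ * ((∑' k : ℤ, (2 : ℝ≥0∞) ^ (k : ℤ) *
                  (∫⁻ s in Set.Ioc (x k) (x (k + 1)),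
                    (∫⁻ y in Set.Ioc s (x (k + 1)), h y) ^ q * w s) ^ (r / q)) ^ (1 / r)
              + (∫⁻ t in Set.Ioi (0 : ℝ),
                  u t * ⨆ s ∈ Set.Ioi t,
                    (∫⁻ y in Set.Ioc t s, w y) ^ (r / q) *
                      (∫⁻ y in Set.Ioi s, h y) ^ r) ^ (1 / r))) := by
  obtain ⟨hu, -⟩ := hu
  obtain ⟨hw, -⟩ := hw
  obtain ⟨M, hM, hupper⟩ := exists_iteratedHardyIntegral_le hq hr hw hx hxpos hcov hu hxu
  have hr' : 0 ≤ 1 / r := by positivity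
  have hc : (2 : ℝ≥0∞) ^ (1 / r) + 1 ≠ ⊤ :=
    add_ne_top.2 ⟨rpow_ne_top_of_nonneg hr' ofNat_ne_top, one_ne_top⟩
  refine ⟨(2 ^ (1 / r) + 1)⁻¹, M ^ (1 / r) * 2 ^ (1 / r), ENNReal.inv_pos.2 hc,
    mul_lt_top (rpow_lt_top_of_nonneg hr' hM.ne) (rpow_lt_top_of_nonneg hr' ofNat_ne_top),
    fun h _ => ⟨?_, ENNReal.rpow_le_mul_rpow_add_rpow (hupper h) hr'⟩⟩
  rw [ENNReal.inv_mul_le_iff (by positivity) hc]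
  exact ENNReal.rpow_add_rpow_le_of_le_two_mul
    (blockSum_le hq.le hr.le hx.monotone hxpos hcov hu hxu) (supremalIntegral_le hq hr.le hw) hr'

/-- discretization, supremal form:
`L(h) ≈ ‖{2^{k/r}(∫_{x_k}^{x_{k+1}}(∫_s^{x_{k+1}} h)^q w ds)^{1/q}}‖_{ℓ^r}
  + (∫_0^∞ u(t) sup_{s>t} (∫_t^s w)^{r/q} (∫_s^∞ h)^r dt)^{1/r}`,
uniformly in nonnegative measurable `h`. -/
theorem lhs_discretization_sum_plus_sup
    (q r : ℝ) (hq : 0 < q) (hr : 0 < r)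
    (u v w : ℝ → ℝ≥0∞) (hu : IsWeight u) (hv : IsWeight v) (hw : IsWeight w)
    (x : ℤ → ℝ) (hx : StrictMono x) (hxpos : ∀ k, 0 < x k)
    (hxu : ∀ k : ℤ, (∫⁻ t in Set.Ioc 0 (x k), u t) = 2 ^ k)
    (hcov : (⋃ k : ℤ, Set.Ioc (x k) (x (k + 1))) = Set.Ioi (0 : ℝ)) :
    ∃ c₁ c₂ : ℝ≥0∞, 0 < c₁ ∧ c₂ < ∞ ∧
      ∀ h : ℝ → ℝ≥0∞, Measurable h →
        (c₁ * ((∑' k : ℤ, (2 : ℝ≥0∞) ^ (k : ℤ) *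
                  (∫⁻ s in Set.Ioc (x k) (x (k + 1)),
                    (∫⁻ y in Set.Ioc s (x (k + 1)), h y) ^ q * w s) ^ (r / q)) ^ (1 / r)
              + (∫⁻ t in Set.Ioi (0 : ℝ),
                  u t * ⨆ s ∈ Set.Ioi t,
                    (∫⁻ y in Set.Ioc t s, w y) ^ (r / q) *
                      (∫⁻ y in Set.Ioi s, h y) ^ r) ^ (1 / r))
            ≤ (∫⁻ t in Set.Ioi (0 : ℝ),
                (∫⁻ s in Set.Ioi t, (∫⁻ y in Set.Ioi s, h y) ^ q * w s) ^ (r / q)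
                  * u t) ^ (1 / r)) ∧
        ((∫⁻ t in Set.Ioi (0 : ℝ),
                (∫⁻ s in Set.Ioi t, (∫⁻ y in Set.Ioi s, h y) ^ q * w s) ^ (r / q)
                  * u t) ^ (1 / r)
            ≤ c₂ * ((∑' k : ℤ, (2 : ℝ≥0∞) ^ (k : ℤ) *
                  (∫⁻ s in Set.Ioc (x k) (x (k + 1)),
                    (∫⁻ y in Set.Ioc s (x (k + 1)), h y) ^ q * w s) ^ (r / q)) ^ (1 / r)
              + (∫⁻ t in Set.Ioi (0 : ℝ),
                  u t * ⨆ s ∈ Set.Ioi t,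
                    (∫⁻ y in Set.Ioc t s, w y) ^ (r / q) *
                      (∫⁻ y in Set.Ioi s, h y) ^ r) ^ (1 / r))) :=
  lhs_discretization_sum_plus_sup_general q r hq hr u w hu hw x hx hxpos hxu hcov
end
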